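/- Let A and B be finite sets with |A| = N_A ≥ 4 and |B| = N_B ≥ 4, and let M ⊆ A × B be a matching of size k with 4 ≤ k. Then the probability that a uniformly random pair (f, g) of injective functions f : Fin 4 → A and g : Fin 4 → B satisfies (f(i), g(i)) ∈ M for every i equals, as a rational number, C(k,4) / (C(N_A,4) · C(N_B,4) · 4!), where C(n,r) denotes the binomial coefficient. Equivalently, the number of such correct pairs divided by the total number (N_A·(N_A−1)·(N_A−2)·(N_A−3))·(N_B·(N_B−1)·(N_B−2)·(N_B−3)) of pairs of injective functions equals C(k,4) / (C(N_A,4) · C(N_B,4) · 4!). -/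
import Mathlib

theorem prob_correct_injective_pairs (A B : Type*) [Fintype A] [Fintype B]
    (NA NB k : ℕ) (hNA : Fintype.card A = NA) (hNB : Fintype.card B = NB)
    (hNA4 : 4 ≤ NA) (hNB4 : 4 ≤ NB) (hk4 : 4 ≤ k)
    (M : Finset (A × B)) (hk : M.card = k)
    (hfst : Set.InjOn Prod.fst (M : Set (A × B)))
    (hsnd : Set.InjOn Prod.snd (M : Set (A × B))) :
    (Nat.card {fg : (Fin 4 → A) × (Fin 4 → B) //
        Function.Injective fg.1 ∧ Function.Injective fg.2 ∧
        ∀ i : Fin 4, (fg.1 i, fg.2 i) ∈ M} : ℚ) /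
      ((NA * (NA - 1) * (NA - 2) * (NA - 3)) *
        (NB * (NB - 1) * (NB - 2) * (NB - 3)) : ℕ) =
    (k.choose 4 : ℚ) /
      ((NA.choose 4 : ℚ) * (NB.choose 4 : ℚ) * (Nat.factorial 4 : ℚ)) := by
  classical
  -- equivalence with embeddings Fin 4 ↪ M
  have e : {fg : (Fin 4 → A) × (Fin 4 → B) //
        Function.Injective fg.1 ∧ Function.Injective fg.2 ∧
        ∀ i : Fin 4, (fg.1 i, fg.2 i) ∈ M} ≃ (Fin 4 ↪ M) :=
    { toFun := fun x => ⟨fun i => ⟨(x.1.1 i, x.1.2 i), x.2.2.2 i⟩, by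
        intro i j hij
        exact x.2.1 (congrArg (fun y => y.1.1) hij)⟩
      invFun := fun h => ⟨(fun i => (h i).1.1, fun i => (h i).1.2), by
        intro i j hij
        exact h.injective (Subtype.ext (hfst (h i).2 (h j).2 hij)), by
        intro i j hij
        exact h.injective (Subtype.ext (hsnd (h i).2 (h j).2 hij)), fun i => (h i).2⟩
      left_inv := fun x => rfl
      right_inv := fun h => by ext i : 2 <;> rfl }
  have hcard : Nat.card {fg : (Fin 4 → A) × (Fin 4 → B) //
        Function.Injective fg.1 ∧ Function.Injective fg.2 ∧
        ∀ i : Fin 4, (fg.1 i, fg.2 i) ∈ M} = k.descFactorial 4 := by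
    rw [Nat.card_congr e, Nat.card_eq_fintype_card, Fintype.card_embedding_eq]
    simp [hk]
  rw [hcard]
  have hA : (NA * (NA - 1) * (NA - 2) * (NA - 3)) = NA.descFactorial 4 := by
    simp [Nat.descFactorial]; ring
  have hB : (NB * (NB - 1) * (NB - 2) * (NB - 3)) = NB.descFactorial 4 := by
    simp [Nat.descFactorial]; ring
  rw [hA, hB]
  rw [Nat.descFactorial_eq_factorial_mul_choose, Nat.descFactorial_eq_factorial_mul_choose,
    Nat.descFactorial_eq_factorial_mul_choose]
  have hcA : (0 : ℚ) < NA.choose 4 := by exact_mod_cast Nat.choose_pos hNA4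
  have hcB : (0 : ℚ) < NB.choose 4 := by exact_mod_cast Nat.choose_pos hNB4
  have hf : (0 : ℚ) < Nat.factorial 4 := by positivity
  push_cast
  field_simp
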